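/- For every n ≥ 2 and every subset A of L, if some subset B ⊆ L \ A is uncountable and closed in L with its Euclidean subspace topology (for example, B homeomorphic to the Cantor set), then the space (X, τ(A)) is not Lindelöf. -/

import Mathlib

open Metric Set TopologicalSpace

noncomputable section

/-- The last coordinate `x (n-1)` of a point of `EuclideanSpace ℝ (Fin n)`
(junk value `0` if `n = 0`). -/
def lastCoord (n : ℕ) (x : EuclideanSpace ℝ (Fin n)) : ℝ :=
  if h : 0 < n then x ⟨n - 1, Nat.sub_lt h one_pos⟩ else 0

/-- The closed upper half-space `X = {x : x (n-1) ≥ 0}`. -/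
def HalfSpace (n : ℕ) : Set (EuclideanSpace ℝ (Fin n)) := {x | 0 ≤ lastCoord n x}

/-- The open upper half-space `P = {x : x (n-1) > 0}`. -/
def OpenHalf (n : ℕ) : Set (EuclideanSpace ℝ (Fin n)) := {x | 0 < lastCoord n x}

/-- The boundary hyperplane `L = {x : x (n-1) = 0}`. -/
def Bdry (n : ℕ) : Set (EuclideanSpace ℝ (Fin n)) := {x | lastCoord n x = 0}

/-- The `n`-th standard basis vector `e` (junk value `0` if `n = 0`). -/
def eVec (n : ℕ) : EuclideanSpace ℝ (Fin n) :=
  if h : 0 < n then EuclideanSpace.single ⟨n - 1, Nat.sub_lt h one_pos⟩ (1 : ℝ) else 0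

/-- The tangent ball `B̃(a, ε) = {a} ∪ B(a + ε • e, ε)`. -/
def tangentBall (n : ℕ) (a : EuclideanSpace ℝ (Fin n)) (ε : ℝ) :
    Set (EuclideanSpace ℝ (Fin n)) :=
  {a} ∪ ball (a + ε • eVec n) ε

/-- The generating family for the topology `τ(A)` on `X`:
balls `B(a,ε)` with `a ∈ P`, `0 < ε < a (n-1)`; traces `B(a,ε) ∩ X` with `a ∈ A`, `ε > 0`;
and tangent balls `B̃(a,ε)` with `a ∈ L \ A`, `ε > 0`. -/
def niemGen (n : ℕ) (A : Set (EuclideanSpace ℝ (Fin n))) : Set (Set (HalfSpace n)) :=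
  {s | ∃ a ∈ OpenHalf n, ∃ ε, 0 < ε ∧ ε < lastCoord n a ∧
      s = Subtype.val ⁻¹' ball a ε} ∪
  {s | ∃ a ∈ A, ∃ ε, 0 < ε ∧ s = Subtype.val ⁻¹' ball a ε} ∪
  {s | ∃ a ∈ Bdry n \ A, ∃ ε, 0 < ε ∧ s = Subtype.val ⁻¹' tangentBall n a ε}

/-- The topology `τ(A)` on `X`; `τ(∅)` is the Niemytzki topology `τ_N`. -/
def tau (n : ℕ) (A : Set (EuclideanSpace ℝ (Fin n))) : TopologicalSpace (HalfSpace n) :=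
  generateFrom (niemGen n A)

/-- The inclusion of `L` into `X`. -/
def inclLX (n : ℕ) (x : Bdry n) : HalfSpace n := ⟨x.1, le_of_eq x.2.symm⟩

/-- The subspace topology `τ(A)|_L` on `L` induced from `(X, τ(A))`. -/
def tauL (n : ℕ) (A : Set (EuclideanSpace ℝ (Fin n))) : TopologicalSpace (Bdry n) :=
  TopologicalSpace.induced (inclLX n) (tau n A)

/-- A space is perfect if every closed set is a `Gδ`-set. -/
def IsPerfectSpace (X : Type*) [TopologicalSpace X] : Prop :=
  ∀ s : Set X, IsClosed s → IsGδ s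

/-- An `Fσ`-set: a countable union of closed sets. -/
def IsFsigma {X : Type*} [TopologicalSpace X] (s : Set X) : Prop :=
  ∃ F : ℕ → Set X, (∀ i, IsClosed (F i)) ∧ s = ⋃ i, F i

/-- Countably paracompact: every countable open cover admits a locally finite open refinement. -/
def CountablyParacompact (X : Type*) [TopologicalSpace X] : Prop :=
  ∀ u : ℕ → Set X, (∀ i, IsOpen (u i)) → (⋃ i, u i) = Set.univ →
    ∃ (ι : Type) (v : ι → Set X), (∀ j, IsOpen (v j)) ∧ (⋃ j, v j) = Set.univ ∧
      LocallyFinite v ∧ ∀ j, ∃ i, v j ⊆ u i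

/-- A zero set: the zero locus of a continuous real-valued function. -/
def IsZeroSet {X : Type*} [TopologicalSpace X] (s : Set X) : Prop :=
  ∃ f : X → ℝ, Continuous f ∧ s = f ⁻¹' {0}

/-- `Y` is z-embedded in `X` if every zero set of the subspace `Y`
is the trace on `Y` of a zero set of `X`. -/
def ZEmbedded {X : Type*} [TopologicalSpace X] (Y : Set X) : Prop :=
  ∀ s : Set Y, IsZeroSet s → ∃ Z : Set X, IsZeroSet Z ∧ s = Subtype.val ⁻¹' Z

/-- `Y` is `C*`-embedded in `X` if every bounded continuous real-valued function on the
subspace `Y` extends to a bounded continuous function on `X`. -/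
def CStarEmbedded {X : Type*} [TopologicalSpace X] (Y : Set X) : Prop :=
  ∀ f : Y → ℝ, Continuous f → (∃ M, ∀ y, |f y| ≤ M) →
    ∃ g : X → ℝ, Continuous g ∧ (∃ M, ∀ x, |g x| ≤ M) ∧ ∀ y : Y, g ↑y = f y
end

/-!
Each basic neighbourhood in `τ(A)` of a point `x` lies in a Euclidean ball around `x` of
comparable radius, so `τ(A)` is finer than the Euclidean topology and `B` stays closed in
`(X, τ(A))`. For `b ∈ B ⊆ L \ A` the tangent ball `B̃(b, 1)` meets `L` only in `b`, so `B` is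
also discrete there. A closed discrete subspace of a Lindelöf space is countable.
-/

open Topology

theorem isClosed_of_subset_of_isClosed_preimage_val {X : Type*} [TopologicalSpace X]
    {s t : Set X} (hs : IsClosed s) (hts : t ⊆ s) (ht : IsClosed (Subtype.val ⁻¹' t : Set s)) :
    IsClosed t := by
  simpa [Subtype.image_preimage_coe, inter_eq_right.mpr hts] using
    hs.isClosedMap_subtype_val _ ht

section TangentBalls

variable {n : ℕ}

theorem continuous_lastCoord (n : ℕ) : Continuous (lastCoord n) := by
  unfold lastCoord
  split_ifs
  exacts [(EuclideanSpace.proj _).continuous, continuous_const]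

theorem isClosed_bdry (n : ℕ) : IsClosed (Bdry n) :=
  isClosed_eq (continuous_lastCoord n) continuous_const

theorem bdry_subset_halfSpace (n : ℕ) : Bdry n ⊆ HalfSpace n :=
  fun _ hx => hx.ge

theorem abs_lastCoord_sub_le_dist (hn : 0 < n) (x y : EuclideanSpace ℝ (Fin n)) :
    |lastCoord n x - lastCoord n y| ≤ dist x y := by
  simp only [lastCoord, dif_pos hn, ← Real.dist_eq]
  exact PiLp.dist_apply_le _ _ _

theorem lastCoord_add_smul_eVec (hn : 0 < n) (a : EuclideanSpace ℝ (Fin n)) (ε : ℝ) :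
    lastCoord n (a + ε • eVec n) = lastCoord n a + ε := by
  simp [lastCoord, eVec, dif_pos hn]

theorem norm_eVec_le_one (n : ℕ) : ‖eVec n‖ ≤ 1 := by
  unfold eVec
  split_ifs <;> simp

theorem ball_add_smul_eVec_subset_openHalf (hn : 0 < n) {a : EuclideanSpace ℝ (Fin n)}
    (ha : a ∈ Bdry n) (ε : ℝ) : ball (a + ε • eVec n) ε ⊆ OpenHalf n := by
  intro y hy
  have h := abs_lastCoord_sub_le_dist hn y (a + ε • eVec n)
  rw [lastCoord_add_smul_eVec hn, ha, zero_add] at h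
  show 0 < lastCoord n y
  linarith [(abs_lt.mp (h.trans_lt (mem_ball.mp hy))).1]

theorem tangentBall_inter_bdry (hn : 0 < n) {a : EuclideanSpace ℝ (Fin n)} (ha : a ∈ Bdry n)
    (ε : ℝ) : tangentBall n a ε ∩ Bdry n = {a} := by
  refine subset_antisymm ?_ (singleton_subset_iff.mpr ⟨Or.inl rfl, ha⟩)
  rintro y ⟨hy | hy, hyL⟩
  · exact hy
  · exact absurd hyL (ball_add_smul_eVec_subset_openHalf hn ha ε hy).ne'

theorem tangentBall_subset_ball (a : EuclideanSpace ℝ (Fin n)) {ε : ℝ} (hε : 0 < ε) :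
    tangentBall n a ε ⊆ ball a (2 * ε) := by
  rintro y (rfl | hy)
  · exact mem_ball_self (by linarith)
  · have hcenter : dist (a + ε • eVec n) a ≤ ε := by
      simpa [norm_smul, abs_of_pos hε] using
        mul_le_of_le_one_right hε.le (norm_eVec_le_one n)
    calc dist y a ≤ dist y (a + ε • eVec n) + dist (a + ε • eVec n) a := dist_triangle _ _ _
      _ < ε + ε := add_lt_add_of_lt_of_le (mem_ball.mp hy) hcenter
      _ = 2 * ε := by ring

end TangentBalls

section Tau

variable {n : ℕ} (A : Set (EuclideanSpace ℝ (Fin n)))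

theorem isOpen_tau_preimage_val {V : Set (EuclideanSpace ℝ (Fin n))} (hV : IsOpen V) :
    IsOpen[tau n A] (Subtype.val ⁻¹' V : Set (HalfSpace n)) := by
  refine @isOpen_iff_forall_mem_open _ (tau n A) |>.mpr fun x hx => ?_
  obtain ⟨r, hr, hball⟩ := Metric.isOpen_iff.mp hV x hx
  suffices ∃ s ∈ niemGen n A, x ∈ s ∧ s ⊆ Subtype.val ⁻¹' ball x.1 r from
    let ⟨s, hs, hxs, hsV⟩ := this
    ⟨s, hsV.trans (preimage_mono hball), isOpen_generateFrom_of_mem hs, hxs⟩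
  rcases (show 0 ≤ lastCoord n x from x.2).lt_or_eq with hpos | hzero
  · refine ⟨Subtype.val ⁻¹' ball x.1 (min r (lastCoord n x / 2)),
      Or.inl (Or.inl ⟨x, hpos, _, by positivity,
        by linarith [min_le_right r (lastCoord n x / 2)], rfl⟩),
      mem_ball_self (by positivity), preimage_mono (ball_subset_ball (min_le_left _ _))⟩
  by_cases hxA : x.1 ∈ A
  · exact ⟨_, Or.inl (Or.inr ⟨x, hxA, r, hr, rfl⟩), mem_ball_self hr, subset_rfl⟩
  · refine ⟨Subtype.val ⁻¹' tangentBall n x (r / 2),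
      Or.inr ⟨x, ⟨hzero.symm, hxA⟩, r / 2, by positivity, rfl⟩, Or.inl rfl, preimage_mono ?_⟩
    simpa [mul_div_cancel₀] using tangentBall_subset_ball x.1 (half_pos hr)

theorem isClosed_tau_preimage_val {F : Set (EuclideanSpace ℝ (Fin n))} (hF : IsClosed F) :
    IsClosed[tau n A] (Subtype.val ⁻¹' F : Set (HalfSpace n)) := by
  rw [← @isOpen_compl_iff _ _ (tau n A), ← preimage_compl]
  exact isOpen_tau_preimage_val A hF.isOpen_compl

theorem isDiscrete_tau_preimage_val (hn : 0 < n) {B : Set (EuclideanSpace ℝ (Fin n))}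
    (hB : B ⊆ Bdry n \ A) : @IsDiscrete _ (tau n A) (Subtype.val ⁻¹' B : Set (HalfSpace n)) := by
  refine @isDiscrete_iff_forall_mem_exists_isOpen _ (tau n A) _ |>.mpr fun b hb => ?_
  refine ⟨Subtype.val ⁻¹' tangentBall n b 1,
    isOpen_generateFrom_of_mem (Or.inr ⟨b, hB hb, 1, one_pos, rfl⟩), ?_⟩
  have hsingle := tangentBall_inter_bdry hn (hB hb).1 1
  ext x
  refine ⟨fun ⟨hxT, hxB⟩ => Subtype.ext ?_, by rintro rfl; exact ⟨Or.inl rfl, hb⟩⟩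
  exact hsingle.subset ⟨hxT, (hB hxB).1⟩

end Tau

theorem tauA_not_lindelof_general (n : ℕ) (hn : 2 ≤ n)
    (A : Set (EuclideanSpace ℝ (Fin n)))
    (B : Set (EuclideanSpace ℝ (Fin n))) (hB : B ⊆ Bdry n \ A)
    (hBu : ¬ B.Countable) (hBc : IsClosed (Subtype.val ⁻¹' B : Set (Bdry n))) :
    ¬ @LindelofSpace (HalfSpace n) (tau n A) := by
  intro hL
  have hB_closed : IsClosed B :=
    isClosed_of_subset_of_isClosed_preimage_val (isClosed_bdry n) (fun _ hb => (hB hb).1) hBc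
  let := tau n A
  have hBX_countable : (Subtype.val ⁻¹' B : Set (HalfSpace n)).Countable :=
    (isClosed_tau_preimage_val A hB_closed).isLindelof.countable_of_isDiscrete
      (isDiscrete_tau_preimage_val A (by omega) hB)
  refine hBu ((hBX_countable.image Subtype.val).mono fun b hb => ?_)
  exact ⟨⟨b, bdry_subset_halfSpace n (hB hb).1⟩, hb, rfl⟩

/-- For every `n ≥ 2` and `A ⊆ L`, if some `B ⊆ L \ A` is uncountable and closed in the
Euclidean topology of `L`, then `(X, τ(A))` is not Lindelöf. -/
theorem tauA_not_lindelof (n : ℕ) (hn : 2 ≤ n)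
    (A : Set (EuclideanSpace ℝ (Fin n))) (hA : A ⊆ Bdry n)
    (B : Set (EuclideanSpace ℝ (Fin n))) (hB : B ⊆ Bdry n \ A)
    (hBu : ¬ B.Countable) (hBc : IsClosed (Subtype.val ⁻¹' B : Set (Bdry n))) :
    ¬ @LindelofSpace (HalfSpace n) (tau n A) :=
  tauA_not_lindelof_general n hn A B hB hBu hBc
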